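/- Fix m ∈ [0,1) and for each natural number N set I_N = ∫₀^{2K(m)} dn(u|m)^N du. Then for every natural number N ≥ 1 the recursion (N + 1)·I_{N+2} = (2 − m)·N·I_N − (N − 1)·(1 − m)·I_{N−2} holds. -/

import Mathlib

/-!
Differentiating `sn · cn · dn^(N-1)` with `sn' = cn dn`, `cn' = -sn dn`, `dn' = -m sn cn`, and
eliminating `m sn² = 1 - dn²`, `m cn² = m - 1 + dn²`, gives
`m (sn cn dn^(N-1))' = (N+1) dn^(N+2) - (2-m) N dn^N + (N-1)(1-m) dn^(N-2)`.
Integrating over `[0, 2K]` yields the recursion, since `am 0 = 0` and `am (2K) = π`, so `sn`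
vanishes at both ends. The derivative `am' = dn` comes from the inverse function theorem applied
to `F`, a strictly increasing bijection of `ℝ` for every `m < 1`.
-/

open Real

/-- Incomplete elliptic integral of the first kind `F(θ|m) = ∫₀^θ ds/√(1 - m sin²s)`. -/
noncomputable def ellF (m θ : ℝ) : ℝ :=
  ∫ s in (0:ℝ)..θ, 1 / Real.sqrt (1 - m * Real.sin s ^ 2)

/-- Complete elliptic integral of the first kind `K(m) = F(π/2|m)`. -/
noncomputable def ellK (m : ℝ) : ℝ := ellF m (π / 2)

/-- Complete elliptic integral of the second kind `E(m) = ∫₀^{π/2} √(1 - m sin²θ) dθ`. -/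
noncomputable def ellE (m : ℝ) : ℝ :=
  ∫ θ in (0:ℝ)..(π / 2), Real.sqrt (1 - m * Real.sin θ ^ 2)

/-- Jacobi amplitude: the inverse function of `θ ↦ F(θ|m)`. -/
noncomputable def am (m u : ℝ) : ℝ := Function.invFun (ellF m) u

/-- Jacobi elliptic sine. -/
noncomputable def sn (m u : ℝ) : ℝ := Real.sin (am m u)

/-- Jacobi elliptic cosine. -/
noncomputable def cn (m u : ℝ) : ℝ := Real.cos (am m u)

/-- Jacobi delta amplitude. -/
noncomputable def dn (m u : ℝ) : ℝ := Real.sqrt (1 - m * sn m u ^ 2)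

open Filter intervalIntegral

section Jacobi

variable {m : ℝ}

lemma one_sub_mul_sin_sq_pos (hm : m < 1) (x : ℝ) : 0 < 1 - m * sin x ^ 2 := by
  rcases le_total m 0 with h | h
  · nlinarith [sq_nonneg (sin x)]
  · nlinarith [sin_sq_le_one x]

lemma continuous_ellF_integrand (hm : m < 1) :
    Continuous fun s : ℝ => 1 / √(1 - m * sin s ^ 2) :=
  continuous_const.div (by fun_prop) fun x => (sqrt_pos.2 (one_sub_mul_sin_sq_pos hm x)).ne'

lemma hasDerivAt_ellF (hm : m < 1) (θ : ℝ) :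
    HasDerivAt (ellF m) (1 / √(1 - m * sin θ ^ 2)) θ :=
  integral_hasDerivAt_right ((continuous_ellF_integrand hm).intervalIntegrable 0 θ)
    ((continuous_ellF_integrand hm).stronglyMeasurableAtFilter _ _)
    (continuous_ellF_integrand hm).continuousAt

lemma continuous_ellF (hm : m < 1) : Continuous (ellF m) :=
  continuous_iff_continuousAt.2 fun θ => (hasDerivAt_ellF hm θ).continuousAt

lemma strictMono_ellF (hm : m < 1) : StrictMono (ellF m) :=
  strictMono_of_hasDerivAt_pos (hasDerivAt_ellF hm) fun θ =>
    one_div_pos.2 (sqrt_pos.2 (one_sub_mul_sin_sq_pos hm θ))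

lemma ellF_neg (m θ : ℝ) : ellF m (-θ) = -ellF m θ := by
  have h := integral_comp_neg (a := 0) (b := θ) fun s => 1 / √(1 - m * sin s ^ 2)
  simp only [sin_neg, neg_sq, neg_zero] at h
  rw [ellF, ellF, h, integral_symm]

lemma div_sqrt_le_ellF (hm : m < 1) {θ : ℝ} (hθ : 0 ≤ θ) : θ / √(1 + |m|) ≤ ellF m θ := by
  have hbound (s : ℝ) : 1 / √(1 + |m|) ≤ 1 / √(1 - m * sin s ^ 2) :=
    one_div_le_one_div_of_le (sqrt_pos.2 (one_sub_mul_sin_sq_pos hm s)) <| sqrt_le_sqrt <| by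
      nlinarith [sin_sq_le_one s, sq_nonneg (sin s), neg_abs_le m, abs_nonneg m]
  calc θ / √(1 + |m|) = ∫ _ in (0:ℝ)..θ, 1 / √(1 + |m|) := by
        rw [integral_const, smul_eq_mul, sub_zero, div_eq_mul_one_div]
    _ ≤ ellF m θ := integral_mono_on hθ intervalIntegrable_const
        ((continuous_ellF_integrand hm).intervalIntegrable 0 θ) fun s _ => hbound s

lemma tendsto_ellF_atTop (hm : m < 1) : Tendsto (ellF m) atTop atTop :=
  tendsto_atTop_mono' _ ((eventually_ge_atTop 0).mono fun _ hθ => div_sqrt_le_ellF hm hθ)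
    (tendsto_id.atTop_div_const (sqrt_pos.2 (by positivity)))

lemma tendsto_ellF_atBot (hm : m < 1) : Tendsto (ellF m) atBot atBot := by
  have h : ellF m = fun θ => -ellF m (-θ) := funext fun θ => by rw [ellF_neg, neg_neg]
  rw [h]
  exact tendsto_neg_atTop_atBot.comp ((tendsto_ellF_atTop hm).comp tendsto_neg_atBot_atTop)

lemma surjective_ellF (hm : m < 1) : Function.Surjective (ellF m) :=
  (continuous_ellF hm).surjective (tendsto_ellF_atTop hm) (tendsto_ellF_atBot hm)

lemma ellF_am (hm : m < 1) (u : ℝ) : ellF m (am m u) = u :=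
  Function.invFun_eq (surjective_ellF hm u)

lemma am_ellF (hm : m < 1) (θ : ℝ) : am m (ellF m θ) = θ :=
  Function.leftInverse_invFun (strictMono_ellF hm).injective θ

lemma continuous_am (hm : m < 1) : Continuous (am m) := by
  refine Monotone.continuous_of_surjective (fun u v huv => ?_) fun θ => ⟨_, am_ellF hm θ⟩
  rwa [← (strictMono_ellF hm).le_iff_le, ellF_am hm, ellF_am hm]

lemma hasDerivAt_am (hm : m < 1) (u : ℝ) : HasDerivAt (am m) (dn m u) u := by
  have h := HasDerivAt.of_local_left_inverse (continuous_am hm).continuousAt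
    (hasDerivAt_ellF hm (am m u)) (one_div_pos.2 (sqrt_pos.2 (one_sub_mul_sin_sq_pos hm _))).ne'
    (Eventually.of_forall (ellF_am hm))
  rwa [one_div, inv_inv] at h

lemma dn_pos (hm : m < 1) (u : ℝ) : 0 < dn m u :=
  sqrt_pos.2 (one_sub_mul_sin_sq_pos hm (am m u))

lemma dn_sq (hm : m < 1) (u : ℝ) : dn m u ^ 2 = 1 - m * sn m u ^ 2 :=
  sq_sqrt (one_sub_mul_sin_sq_pos hm (am m u)).le

lemma cn_sq (m u : ℝ) : cn m u ^ 2 = 1 - sn m u ^ 2 := cos_sq' (am m u)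

lemma hasDerivAt_sn (hm : m < 1) (u : ℝ) : HasDerivAt (sn m) (cn m u * dn m u) u :=
  (hasDerivAt_sin (am m u)).comp u (hasDerivAt_am hm u)

lemma hasDerivAt_cn (hm : m < 1) (u : ℝ) : HasDerivAt (cn m) (-(sn m u * dn m u)) u :=
  ((hasDerivAt_cos (am m u)).comp u (hasDerivAt_am hm u)).congr_deriv (neg_mul _ _)

lemma hasDerivAt_dn (hm : m < 1) (u : ℝ) : HasDerivAt (dn m) (-(m * sn m u * cn m u)) u := by
  have h := ((((hasDerivAt_sn hm u).pow 2).const_mul m).const_sub 1).sqrt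
    (one_sub_mul_sin_sq_pos hm (am m u)).ne'
  refine h.congr_deriv ?_
  rw [show √(1 - m * (sn m ^ 2) u) = dn m u from rfl]
  field_simp [(dn_pos hm u).ne']
  ring

lemma continuous_sn (hm : m < 1) : Continuous (sn m) := continuous_sin.comp (continuous_am hm)

lemma continuous_cn (hm : m < 1) : Continuous (cn m) := continuous_cos.comp (continuous_am hm)

lemma continuous_dn (hm : m < 1) : Continuous (dn m) :=
  continuous_iff_continuousAt.2 fun u => (hasDerivAt_dn hm u).continuousAt

lemma ellF_pi (hm : m < 1) : ellF m π = 2 * ellK m := by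
  have hf := (continuous_ellF_integrand hm).intervalIntegrable (μ := MeasureTheory.volume)
  have hsymm : ∫ s in π / 2..π, 1 / √(1 - m * sin s ^ 2) = ellK m := by
    have h := integral_comp_sub_left (a := 0) (b := π / 2)
      (fun s => 1 / √(1 - m * sin s ^ 2)) π
    rw [sub_zero, show π - π / 2 = π / 2 by ring] at h
    simp only [sin_pi_sub] at h
    rw [← h, ellK, ellF]
  rw [ellF, ← integral_add_adjacent_intervals (hf 0 (π / 2)) (hf (π / 2) π), hsymm, ← ellF,
    ← ellK]
  ring

lemma sn_zero (hm : m < 1) : sn m 0 = 0 := by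
  have h := am_ellF hm 0
  rw [ellF, integral_same] at h
  rw [sn, h, sin_zero]

lemma sn_two_mul_ellK (hm : m < 1) : sn m (2 * ellK m) = 0 := by
  rw [sn, ← ellF_pi hm, am_ellF hm, sin_pi]

lemma hasDerivAt_const_mul_sn_mul_cn_mul_dn_pow (hm : m < 1) (n : ℕ) (u : ℝ) :
    HasDerivAt (fun v => m * (sn m v * cn m v * dn m v ^ n))
      ((n + 2) * dn m u ^ (n + 3) - (2 - m) * (n + 1) * dn m u ^ (n + 1)
        + n * (1 - m) * dn m u ^ (n - 1)) u := by
  -- at `n = 0` the exponent `n - 1` truncates, harmlessly: its coefficient is `0`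
  have hpow : (n : ℝ) * dn m u ^ (n - 1) * dn m u = n * dn m u ^ n := by
    cases n with
    | zero => simp
    | succ k => rw [Nat.add_sub_cancel, pow_succ]; ring
  refine ((((hasDerivAt_sn hm u).mul (hasDerivAt_cn hm u)).mul
    ((hasDerivAt_dn hm u).pow n)).const_mul m).congr_deriv ?_
  simp only [Pi.mul_apply, Pi.pow_apply]
  set s := sn m u
  set c := cn m u
  set d := dn m u
  linear_combination (m * d * d ^ n - n * d ^ (n - 1) * m ^ 2 * s ^ 2) * cn_sq m u
    + (-2 * d * d ^ n - n * d ^ (n - 1) * (m - m * s ^ 2 - 1 + d ^ 2)) * dn_sq hm u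
    + (d ^ 2 - 2 + m) * d * hpow

lemma integral_dn_pow_relation (hm : m < 1) (n : ℕ) :
    (n + 2) * (∫ u in (0:ℝ)..2 * ellK m, dn m u ^ (n + 3))
      - (2 - m) * (n + 1) * (∫ u in (0:ℝ)..2 * ellK m, dn m u ^ (n + 1))
      + n * (1 - m) * (∫ u in (0:ℝ)..2 * ellK m, dn m u ^ (n - 1)) = 0 := by
  have hint (k : ℕ) :
      IntervalIntegrable (fun u => dn m u ^ k) MeasureTheory.volume 0 (2 * ellK m) :=
    ((continuous_dn hm).pow k).intervalIntegrable _ _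
  have hFTC := integral_eq_sub_of_hasDerivAt
    (fun u _ => hasDerivAt_const_mul_sn_mul_cn_mul_dn_pow hm n u)
    ((((hint _).const_mul _).sub ((hint _).const_mul _)).add ((hint _).const_mul _))
  rw [integral_add (((hint _).const_mul _).sub ((hint _).const_mul _)) ((hint _).const_mul _),
    integral_sub ((hint _).const_mul _) ((hint _).const_mul _), integral_const_mul,
    integral_const_mul, integral_const_mul] at hFTC
  simpa [sn_zero hm, sn_two_mul_ellK hm] using hFTC

end Jacobi

/-- **Recursion for the moments `I_N = ∫₀^{2K(m)} dn(u|m)^N du`:**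
for `N ≥ 1`, `(N+1) I_{N+2} = (2-m) N I_N - (N-1)(1-m) I_{N-2}`. -/
theorem dn_moment_recursion (m : ℝ) (hm : m ∈ Set.Ico (0:ℝ) 1)
    (I : ℕ → ℝ) (hI : ∀ N : ℕ, I N = ∫ u in (0:ℝ)..(2 * ellK m), dn m u ^ N)
    (N : ℕ) (hN : 1 ≤ N) :
    ((N : ℝ) + 1) * I (N + 2) =
      (2 - m) * (N : ℝ) * I N - ((N : ℝ) - 1) * (1 - m) * I (N - 2) := by
  obtain ⟨n, rfl⟩ := Nat.exists_eq_add_of_le' hN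
  have h := integral_dn_pow_relation hm.2 n
  rw [show n + 1 + 2 = n + 3 from rfl, show n + 1 - 2 = n - 1 by omega, hI, hI, hI]
  push_cast
  linarith
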